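/- For every even natural number n ≥ 2 one has C(n, n/2)² + 1 + ∑_{k=1}^{n/2 - 1} (n/2 - k) · C(n,k)² + (n/2 - 1) = (n/2 + 4) · C(n-1, n/2)²; equivalently, C(n,n/2)² + 1 + ∑_{d even, 2≤d≤n-2} (d/2) · C(n,(n-d)/2)² = (n/2 + 4)·C(n-1,n/2)² − (n/2 − 1). -/

import Mathlib

/-!
Writing `n = 2m`, Pascal's rule gives `C(2m, m) = 2 C(2m-1, m)`, so the identity reduces to
`∑_{k<m} (m - k) C(2m, k)² = m C(2m-1, m)²`. This is the case `j = m - 1` of the telescoping identity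
`∑_{k ≤ j} (n - 2k) C(n, k)² = n C(n-1, j)²`, whose inductive step follows from
`n C(n-1, j) = (j+1) C(n, j+1)` and `C(n, j+1) = C(n-1, j) + C(n-1, j+1)`.
-/

open Finset

theorem Nat.sum_range_sub_two_mul_mul_choose_sq (p j : ℕ) :
    ∑ k ∈ range (j + 1), ((p + 1 : ℤ) - 2 * k) * ((p + 1).choose k : ℤ) ^ 2
      = (p + 1) * (p.choose j : ℤ) ^ 2 := by
  induction j with
  | zero => simp
  | succ j ih =>
    have pascal : ((p + 1).choose (j + 1) : ℤ) = p.choose j + p.choose (j + 1) := by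
      exact_mod_cast Nat.choose_succ_succ' p j
    have absorb : ((p + 1) * p.choose j : ℤ) = (p + 1).choose (j + 1) * (j + 1) := by
      exact_mod_cast Nat.add_one_mul_choose_eq p j
    rw [sum_range_succ, ih]
    push_cast
    linear_combination
      (p + 1 : ℤ) * ((p + 1).choose (j + 1) - p.choose j + p.choose (j + 1)) * pascal
        + 2 * ((p + 1).choose (j + 1) : ℤ) * absorb

theorem Nat.choose_two_mul_add_two_eq (q : ℕ) :
    (2 * q + 2).choose (q + 1) = 2 * (2 * q + 1).choose q := by
  rw [Nat.choose_succ_succ', Nat.choose_symm_half, ← two_mul]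

theorem Nat.sum_range_mul_choose_sq_central (q : ℕ) :
    ∑ k ∈ range (q + 1), (q + 1 - k) * (2 * q + 2).choose k ^ 2
      = (q + 1) * (2 * q + 1).choose q ^ 2 := by
  apply Nat.eq_of_mul_eq_mul_left two_pos
  rw [← Nat.cast_inj (R := ℤ), mul_sum]
  push_cast
  convert Nat.sum_range_sub_two_mul_mul_choose_sq (2 * q + 1) q using 1
  · refine sum_congr rfl fun k hk => ?_
    push_cast [(mem_range.mp hk).le]
    ring
  · push_cast
    ring

theorem stmt_4 (n : ℕ) (hn : 2 ≤ n) (heven : Even n) :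
    (n.choose (n / 2)) ^ 2 + 1
        + (∑ k ∈ Finset.Icc 1 (n / 2 - 1), (n / 2 - k) * (n.choose k) ^ 2) + (n / 2 - 1)
      = (n / 2 + 4) * ((n - 1).choose (n / 2)) ^ 2 := by
  obtain ⟨q, rfl⟩ : ∃ q, n = 2 * q + 2 := ⟨n / 2 - 1, by grind⟩
  have central_sum := Nat.sum_range_mul_choose_sq_central q
  rw [sum_range_succ'] at central_sum
  rw [← Ico_add_one_right_eq_Icc, sum_Ico_eq_sum_range]
  simp only [show (2 * q + 2) / 2 = q + 1 by omega, show 2 * q + 2 - 1 = 2 * q + 1 by omega,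
    Nat.add_sub_cancel, Nat.choose_two_mul_add_two_eq, Nat.choose_symm_half,
    Nat.choose_zero_right, Nat.sub_zero, one_pow, mul_one, Nat.add_comm 1] at central_sum ⊢
  linear_combination central_sum
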